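/- arXiv:2305.19000 — 4 statements merged into one kernel-verified Lean document; each statement's English description precedes it below -/
import Mathlib

section
/- Let g₁, g₂ ∈ ℝ^m with ‖g₁‖ = ‖g₂‖ ≠ 0 and angle α ∈ (0, π) between them, and G the matrix with columns g₁, g₂. Then the condition number of G equals tan(α/2) if π/2 ≤ α < π and cot(α/2) if 0 < α < π/2; in particular κ(G) = 1 iff g₁ ⊥ g₂. -/
/-!
With `s = ‖g₁‖² = ‖g₂‖²` and `c = cos α`, the Gram matrix is `GᵀG = s • !![1, c; c, 1]`, whose
eigenvalues (trace `2s`, determinant `s²(1 - c²)`) are `s (1 ± |c|)`. Hence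
`κ(G) = √(1 + |c|) / √(1 - |c|)`, and the half-angle formulas `1 + cos α = 2 cos² (α/2)`,
`1 - cos α = 2 sin² (α/2)` turn this into `cot (α/2)` for `c ≥ 0` and `tan (α/2)` for `c ≤ 0`.
-/

open Matrix

lemma ciSup_fin_two {α : Type*} [ConditionallyCompleteLattice α] (f : Fin 2 → α) :
    ⨆ i, f i = f 0 ⊔ f 1 := by
  rw [← Finset.sup'_univ_eq_ciSup]; simp [Fin.univ_succ]

lemma ciInf_fin_two {α : Type*} [ConditionallyCompleteLattice α] (f : Fin 2 → α) :
    ⨅ i, f i = f 0 ⊓ f 1 := by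
  rw [← Finset.inf'_univ_eq_ciInf]; simp [Fin.univ_succ]

lemma max_eq_add_abs_and_min_eq_sub_abs_of_add_of_mul {x y a b : ℝ}
    (hadd : x + y = 2 * a) (hmul : x * y = a ^ 2 - b ^ 2) :
    max x y = a + |b| ∧ min x y = a - |b| := by
  have hroots : (x - (a + |b|)) * (x - (a - |b|)) = 0 := by
    linear_combination x * hadd - hmul - sq_abs b
  have hb := abs_nonneg b
  rcases mul_eq_zero.mp hroots with hx | hx
  · obtain rfl : x = a + |b| := by linarith
    obtain rfl : y = a - |b| := by linarith
    exact ⟨max_eq_left (by linarith), min_eq_right (by linarith)⟩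
  · obtain rfl : x = a - |b| := by linarith
    obtain rfl : y = a + |b| := by linarith
    exact ⟨max_eq_right (by linarith), min_eq_left (by linarith)⟩

namespace Matrix.IsHermitian

variable {A : Matrix (Fin 2) (Fin 2) ℝ} (hA : A.IsHermitian)

theorem eigenvalues_zero_add_eigenvalues_one : hA.eigenvalues 0 + hA.eigenvalues 1 = A.trace := by
  simp [hA.trace_eq_sum_eigenvalues, Fin.sum_univ_two]

theorem eigenvalues_zero_mul_eigenvalues_one : hA.eigenvalues 0 * hA.eigenvalues 1 = A.det := by
  simp [hA.det_eq_prod_eigenvalues, Fin.prod_univ_two]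

theorem iSup_eigenvalues_eq_add_abs_and_iInf_eigenvalues_eq_sub_abs {a b : ℝ}
    (h00 : A 0 0 = a) (h11 : A 1 1 = a) (h01 : A 0 1 = b) :
    (⨆ i, hA.eigenvalues i) = a + |b| ∧ (⨅ i, hA.eigenvalues i) = a - |b| := by
  have h10 : A 1 0 = b := by simpa [h01] using hA.apply 0 1
  rw [ciSup_fin_two, ciInf_fin_two]
  refine max_eq_add_abs_and_min_eq_sub_abs_of_add_of_mul ?_ ?_
  · rw [hA.eigenvalues_zero_add_eigenvalues_one, trace_fin_two, h00, h11, two_mul]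
  · rw [hA.eigenvalues_zero_mul_eigenvalues_one, det_fin_two, h00, h11, h01, h10]
    ring

end Matrix.IsHermitian

namespace Real

lemma tan_half_eq_sqrt_div_sqrt {α : ℝ} (h0 : 0 ≤ α) (hπ : α ≤ π) :
    tan (α / 2) = √(1 - cos α) / √(1 + cos α) := by
  rw [tan_eq_sin_div_cos, sin_half_eq_sqrt h0 (by linarith [pi_pos]),
    cos_half (by linarith [pi_pos]) hπ, sqrt_div' _ zero_le_two, sqrt_div' _ zero_le_two,
    div_div_div_cancel_right₀ (by positivity)]

lemma cot_half_eq_sqrt_div_sqrt {α : ℝ} (h0 : 0 ≤ α) (hπ : α ≤ π) :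
    cot (α / 2) = √(1 + cos α) / √(1 - cos α) := by
  rw [cot_eq_cos_div_sin, sin_half_eq_sqrt h0 (by linarith [pi_pos]),
    cos_half (by linarith [pi_pos]) hπ, sqrt_div' _ zero_le_two, sqrt_div' _ zero_le_two,
    div_div_div_cancel_right₀ (by positivity)]

lemma sqrt_one_add_abs_div_sqrt_one_sub_abs_eq_one_iff (c : ℝ) :
    √(1 + |c|) / √(1 - |c|) = 1 ↔ c = 0 := by
  refine ⟨fun h => ?_, fun h => by simp [h]⟩
  have hden : √(1 - |c|) ≠ 0 := by rintro h0; simp [h0] at h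
  have hpos : 0 < 1 - |c| := sqrt_ne_zero'.mp hden
  have := congrArg (· ^ 2) ((div_eq_one_iff_eq hden).mp h)
  simp only [sq_sqrt (by positivity : (0:ℝ) ≤ 1 + |c|), sq_sqrt hpos.le] at this
  exact abs_eq_zero.mp (by linarith)

end Real

/-- For a matrix `G` with two equal-norm nonzero columns at angle `α ∈ (0, π)`,
the condition number equals `tan (α/2)` if `π/2 ≤ α` and `cot (α/2)` if `α < π/2`;
it equals 1 iff the columns are orthogonal. -/
theorem stmt_2 (m : ℕ) (g₁ g₂ : Fin m → ℝ)
    (h1 : g₁ ≠ 0)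
    (hnorm : Real.sqrt (∑ i, g₁ i ^ 2) = Real.sqrt (∑ i, g₂ i ^ 2))
    (α : ℝ) (hα0 : 0 < α) (hαπ : α < Real.pi)
    (hcos : Real.cos α
      = (∑ i, g₁ i * g₂ i) / (Real.sqrt (∑ i, g₁ i ^ 2) * Real.sqrt (∑ i, g₂ i ^ 2)))
    (G : Matrix (Fin m) (Fin 2) ℝ)
    (hG : ∀ i, G i 0 = g₁ i ∧ G i 1 = g₂ i)
    (hM : (Gᵀ * G).IsHermitian) :
    (Real.pi / 2 ≤ α →
      Real.sqrt (⨆ i, hM.eigenvalues i) / Real.sqrt (⨅ i, hM.eigenvalues i)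
        = Real.tan (α / 2)) ∧
    (α < Real.pi / 2 →
      Real.sqrt (⨆ i, hM.eigenvalues i) / Real.sqrt (⨅ i, hM.eigenvalues i)
        = Real.cot (α / 2)) ∧
    (Real.sqrt (⨆ i, hM.eigenvalues i) / Real.sqrt (⨅ i, hM.eigenvalues i) = 1
      ↔ ∑ i, g₁ i * g₂ i = 0) := by
  set s := ∑ i, g₁ i ^ 2
  have hs : 0 < s := by
    obtain ⟨i, hi⟩ := Function.ne_iff.mp h1
    exact Finset.sum_pos' (fun j _ => sq_nonneg _) ⟨i, Finset.mem_univ i, sq_pos_of_ne_zero hi⟩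
  have hs₂ : ∑ i, g₂ i ^ 2 = s := (Real.sqrt_inj (by positivity) hs.le).mp hnorm.symm
  have hinner : ∑ i, g₁ i * g₂ i = s * Real.cos α := by
    rw [hcos, ← hnorm, Real.mul_self_sqrt hs.le, mul_div_cancel₀ _ hs.ne']
  have hentry : ∀ j k, (Gᵀ * G) j k = ∑ i, G i j * G i k := fun j k => by
    simp only [mul_apply, transpose_apply]
  obtain ⟨hsup, hinf⟩ := hM.iSup_eigenvalues_eq_add_abs_and_iInf_eigenvalues_eq_sub_abs
    (a := s) (b := s * Real.cos α) (by simp [hentry, hG, sq, s]) (by simp [hentry, hG, sq, ← hs₂])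
    (by simp [hentry, hG, hinner])
  have hκ : Real.sqrt (⨆ i, hM.eigenvalues i) / Real.sqrt (⨅ i, hM.eigenvalues i)
      = √(1 + |Real.cos α|) / √(1 - |Real.cos α|) := by
    rw [hsup, hinf, abs_mul, abs_of_pos hs, ← mul_one_add, ← mul_one_sub, Real.sqrt_mul hs.le,
      Real.sqrt_mul hs.le, mul_div_mul_left _ _ (Real.sqrt_pos.mpr hs).ne']
  refine ⟨fun hα => ?_, fun hα => ?_, ?_⟩
  · rw [hκ, abs_of_nonpos (Real.cos_nonpos_of_pi_div_two_le_of_le hα (by linarith)),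
      sub_neg_eq_add, ← sub_eq_add_neg, Real.tan_half_eq_sqrt_div_sqrt hα0.le hαπ.le]
  · rw [hκ, abs_of_nonneg (Real.cos_nonneg_of_mem_Icc ⟨by linarith, hα.le⟩),
      Real.cot_half_eq_sqrt_div_sqrt hα0.le hαπ.le]
  · rw [hκ, Real.sqrt_one_add_abs_div_sqrt_one_sub_abs_eq_one_iff, hinner, mul_eq_zero,
      or_iff_right hs.ne']
end

section
/- Let G = UΣVᵀ with singular values σ₁ ≥ … ≥ σ_R > 0, Ĝ = σ_R U Vᵀ, w ∈ ℝ^T. Then ⟨Gw, Ĝw⟩ - (1/2)‖Ĝw‖² = (σ_R/2) Σ_{r=1}^R (2σ_r - σ_R)(wᵀv_r)² ≥ (σ_R²/2) ‖w‖². -/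
open Matrix

lemma orth_dot {m T : ℕ} (U : Matrix (Fin m) (Fin T) ℝ) (hU : Uᵀ * U = 1)
    (a b : Fin T → ℝ) : (U *ᵥ a) ⬝ᵥ (U *ᵥ b) = a ⬝ᵥ b := by
  rw [Matrix.dotProduct_mulVec, ← Matrix.mulVec_transpose, Matrix.mulVec_mulVec, hU,
    Matrix.one_mulVec]

/-- Key estimate of the Aligned-MTL convergence proof:
`⟨Gw, Ĝw⟩ - ½‖Ĝw‖² = (σmin/2) ∑ r (2σ_r - σmin)(wᵀv_r)² ≥ (σmin²/2) ‖w‖²`. -/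
theorem stmt_9 (m T : ℕ) (G : Matrix (Fin m) (Fin T) ℝ)
    (U : Matrix (Fin m) (Fin T) ℝ) (V : Matrix (Fin T) (Fin T) ℝ)
    (σ : Fin T → ℝ) (hσ : ∀ i, 0 < σ i)
    (σmin : ℝ) (hmin : ∀ r, σmin ≤ σ r) (hmem : ∃ r, σ r = σmin)
    (hU : Uᵀ * U = 1) (hV : Vᵀ * V = 1) (hV' : V * Vᵀ = 1)
    (hSVD : G = U * Matrix.diagonal σ * Vᵀ)
    (G2 : Matrix (Fin m) (Fin T) ℝ) (hG2 : G2 = σmin • (U * Vᵀ))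
    (w : Fin T → ℝ) :
    (∑ i, G.mulVec w i * G2.mulVec w i) - (1 / 2) * ∑ i, G2.mulVec w i ^ 2
      = (σmin / 2) * ∑ r, (2 * σ r - σmin) * (∑ j, w j * V j r) ^ 2 ∧
    (σmin / 2) * ∑ r, (2 * σ r - σmin) * (∑ j, w j * V j r) ^ 2
      ≥ (σmin ^ 2 / 2) * ∑ j, w j ^ 2 := by
  obtain ⟨r0, hr0⟩ := hmem
  have hσmin : 0 < σmin := hr0 ▸ hσ r0
  set c : Fin T → ℝ := Vᵀ *ᵥ w with hc
  have hcr : ∀ r, c r = ∑ j, w j * V j r := by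
    intro r
    simp [hc, Matrix.mulVec, dotProduct, Matrix.transpose_apply, mul_comm]
  have hGw : G *ᵥ w = U *ᵥ (fun r => σ r * c r) := by
    have hDV : Matrix.diagonal σ *ᵥ (Vᵀ *ᵥ w) = fun r => σ r * c r := by
      funext r; simp [Matrix.mulVec_diagonal, hc]
    rw [hSVD, Matrix.mul_assoc, ← Matrix.mulVec_mulVec, ← Matrix.mulVec_mulVec, hDV]
  have hG2w : G2 *ᵥ w = σmin • (U *ᵥ c) := by
    rw [hG2, Matrix.smul_mulVec, ← Matrix.mulVec_mulVec]
  have h1 : (∑ i, G.mulVec w i * G2.mulVec w i) = σmin * ∑ r, σ r * c r ^ 2 := by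
    have : (G *ᵥ w) ⬝ᵥ (G2 *ᵥ w) = σmin * ((fun r => σ r * c r) ⬝ᵥ c) := by
      rw [hGw, hG2w, dotProduct_smul, orth_dot U hU]
      simp
    simpa [dotProduct, Finset.mul_sum, pow_two, mul_assoc] using this
  have h2 : (∑ i, G2.mulVec w i ^ 2) = σmin ^ 2 * ∑ r, c r ^ 2 := by
    have : (G2 *ᵥ w) ⬝ᵥ (G2 *ᵥ w) = σmin ^ 2 * (c ⬝ᵥ c) := by
      rw [hG2w, dotProduct_smul, smul_dotProduct, orth_dot U hU, smul_smul]
      ring_nf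
    simpa [dotProduct, Finset.mul_sum, pow_two] using this
  have hcsum : ∑ r, c r ^ 2 = ∑ j, w j ^ 2 := by
    have hVV : Vᵀᵀ * Vᵀ = 1 := by simpa using hV'
    have : c ⬝ᵥ c = w ⬝ᵥ w := by
      rw [hc]; exact orth_dot Vᵀ hVV w w
    simpa [dotProduct, pow_two] using this
  have hrw : ∀ r, (2 * σ r - σmin) * (∑ j, w j * V j r) ^ 2
      = (2 * σ r - σmin) * c r ^ 2 := fun r => by rw [hcr r]
  have heq : (∑ i, G.mulVec w i * G2.mulVec w i) - (1 / 2) * ∑ i, G2.mulVec w i ^ 2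
      = (σmin / 2) * ∑ r, (2 * σ r - σmin) * (∑ j, w j * V j r) ^ 2 := by
    rw [h1, h2]
    simp_rw [hrw]
    simp only [Finset.mul_sum]
    rw [← Finset.sum_sub_distrib]
    apply Finset.sum_congr rfl
    intro r _
    ring
  refine ⟨heq, ?_⟩
  simp_rw [hrw]
  rw [← hcsum, Finset.mul_sum, Finset.mul_sum]
  apply Finset.sum_le_sum
  intro r _
  nlinarith [mul_nonneg (mul_nonneg hσmin.le (sub_nonneg.mpr (hmin r))) (sq_nonneg (c r))]
end

section
/- Under the Aligned-MTL update with step size α ≤ 1/Λ: if the singular values of the gradient matrix G(θ_t) satisfy σ_R/σ₁ > C and the projections satisfy ‖V w‖ > ε (with w the task weights), then L₀(θ_t) - L₀(θ_{t+1}) > (α ε² C² / (2‖w‖²)) ‖g₀(θ_t)‖², where g₀ = G w = ∇L₀(θ_t). -/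
/-!
By the descent lemma, `L₀(θ) - L₀(θ - α d) ≥ α ⟪g₀, d⟫ - α²Λ/2 ‖d‖²`. Put `x = Vᵀw`, so that
`‖x‖ = ‖w‖ = ‖Vw‖ > ε` since `V` is orthogonal. The aligned direction `d = σ_R U x` has
`‖d‖² = σ_R² ‖w‖²` and `⟪g₀, d⟫ = σ_R Σ σᵢ xᵢ² ≥ ‖d‖²`, so for `α ≤ 1/Λ` the loss drops by at least
`α σ_R² ‖w‖² / 2`. On the other hand `‖g₀‖² = Σ σᵢ² xᵢ² ≤ σ₁² ‖w‖²`, and `ε < ‖w‖`, `C σ₁ < σ_R`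
bound `α ε² C² ‖g₀‖² / (2‖w‖²)` strictly by `α σ_R² ‖w‖² / 2`.
-/

open Matrix
open scoped RealInnerProductSpace

section Descent

variable {E : Type*} [NormedAddCommGroup E] [InnerProductSpace ℝ E] {f : E → ℝ} {g : E → E} {K : ℝ}

theorem inner_sub_le_of_lipschitzWith (hK : 0 ≤ K) (hg : LipschitzWith (Real.toNNReal K) g)
    (x y v : E) : ⟪g y - g x, v⟫ ≤ K * ‖y - x‖ * ‖v‖ := by
  have hgxy : ‖g y - g x‖ ≤ K * ‖y - x‖ := by
    simpa only [dist_eq_norm, Real.coe_toNNReal K hK] using hg.dist_le_mul y x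
  exact (real_inner_le_norm _ _).trans (mul_le_mul_of_nonneg_right hgxy (norm_nonneg v))

theorem le_add_inner_add_of_lipschitzWith_gradient [CompleteSpace E] (hK : 0 ≤ K)
    (hf : ∀ x, HasGradientAt f (g x) x) (hg : LipschitzWith (Real.toNNReal K) g) (x v : E) :
    f (x + v) ≤ f x + ⟪g x, v⟫ + K / 2 * ‖v‖ ^ 2 := by
  set h : ℝ → ℝ := fun t => f (x + t • v) - t * ⟪g x, v⟫ - K / 2 * ‖v‖ ^ 2 * t ^ 2
  have hderiv (t : ℝ) : HasDerivAt h (⟪g (x + t • v), v⟫ - ⟪g x, v⟫ - K * ‖v‖ ^ 2 * t) t := by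
    have hline : HasDerivAt (fun t : ℝ => x + t • v) v t := by
      simpa using ((hasDerivAt_id t).smul_const v).const_add x
    have hcomp : HasDerivAt (fun t : ℝ => f (x + t • v)) ⟪g (x + t • v), v⟫ t :=
      (hf _).hasFDerivAt.comp_hasDerivAt t hline
    have hlin : HasDerivAt (fun t : ℝ => t * ⟪g x, v⟫) ⟪g x, v⟫ t := by
      simpa using (hasDerivAt_id t).mul_const ⟪g x, v⟫
    have hquad : HasDerivAt (fun t : ℝ => K / 2 * ‖v‖ ^ 2 * t ^ 2) (K * ‖v‖ ^ 2 * t) t := by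
      refine ((hasDerivAt_pow 2 t).const_mul (K / 2 * ‖v‖ ^ 2)).congr_deriv ?_
      norm_num
      ring
    exact (hcomp.sub hlin).sub hquad
  have hanti : AntitoneOn h (Set.Icc 0 1) := by
    refine antitoneOn_of_deriv_nonpos (convex_Icc 0 1)
      (fun t _ => (hderiv t).continuousAt.continuousWithinAt)
      (fun t _ => (hderiv t).differentiableAt.differentiableWithinAt) fun t ht => ?_
    rw [interior_Icc] at ht
    have hlip := inner_sub_le_of_lipschitzWith hK hg x (x + t • v) v
    rw [add_sub_cancel_left, norm_smul, Real.norm_of_nonneg ht.1.le, inner_sub_left] at hlip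
    rw [(hderiv t).deriv]
    linarith
  have := hanti (Set.left_mem_Icc.2 zero_le_one) (Set.right_mem_Icc.2 zero_le_one) zero_le_one
  norm_num [h] at this
  linarith

theorem half_mul_norm_sq_le_sub_of_norm_sq_le_inner [CompleteSpace E] (hK : 0 < K)
    (hf : ∀ x, HasGradientAt f (g x) x) (hg : LipschitzWith (Real.toNNReal K) g)
    {α : ℝ} (hα0 : 0 < α) (hα : α ≤ 1 / K) {x d : E} (hd : ‖d‖ ^ 2 ≤ ⟪g x, d⟫) :
    α / 2 * ‖d‖ ^ 2 ≤ f x - f (x - α • d) := by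
  have hdesc := le_add_inner_add_of_lipschitzWith_gradient hK.le hf hg x (-(α • d))
  rw [← sub_eq_add_neg, inner_neg_right, real_inner_smul_right, norm_neg, norm_smul,
    Real.norm_of_nonneg hα0.le] at hdesc
  have hαK : K * α ≤ 1 := by rwa [le_div_iff₀ hK, mul_comm] at hα
  have hinner : α * ‖d‖ ^ 2 ≤ α * ⟪g x, d⟫ := mul_le_mul_of_nonneg_left hd hα0.le
  have hstep : K * α * (α * ‖d‖ ^ 2) ≤ α * ‖d‖ ^ 2 :=
    mul_le_of_le_one_left (by positivity) hαK
  linarith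

end Descent

theorem hasGradientAt_sum_mul {E ι : Type*} [NormedAddCommGroup E] [InnerProductSpace ℝ E]
    [CompleteSpace E] (s : Finset ι) {L : ι → E → ℝ} {g : ι → E} (w : ι → ℝ) {x : E}
    (h : ∀ i ∈ s, HasGradientAt (L i) (g i) x) :
    HasGradientAt (fun y => ∑ i ∈ s, w i * L i y) (∑ i ∈ s, w i • g i) x := by
  rw [hasGradientAt_iff_hasFDerivAt, map_sum]
  refine HasFDerivAt.fun_sum fun i hi => ?_
  rw [map_smul]
  exact (h i hi).hasFDerivAt.const_mul (w i)

theorem EuclideanSpace.sum_smul_eq_toLp_mulVec {m ι : Type*} [Fintype m] [Fintype ι]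
    (G : Matrix m ι ℝ) (v : ι → EuclideanSpace ℝ m) (hG : ∀ j i, G j i = v i j) (w : ι → ℝ) :
    ∑ i, w i • v i = WithLp.toLp 2 (G *ᵥ w) := by
  ext j
  simp [mulVec, dotProduct, hG, mul_comm]

theorem Matrix.dotProduct_self_eq_sum_sq {R n : Type*} [Fintype n] [CommSemiring R] (v : n → R) :
    v ⬝ᵥ v = ∑ i, v i ^ 2 := by
  simp only [dotProduct, sq]

section SingularValues

variable {R m n k : Type*} [Fintype m] [Fintype n] [Fintype k] [DecidableEq n]

theorem Matrix.mulVec_dotProduct_mulVec_of_transpose_mul_self [CommSemiring R] {U : Matrix m n R}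
    (hU : Uᵀ * U = 1) (y z : n → R) : (U *ᵥ y) ⬝ᵥ (U *ᵥ z) = y ⬝ᵥ z := by
  rw [dotProduct_mulVec, ← mulVec_transpose, mulVec_mulVec, hU, one_mulVec]

variable {U : Matrix m n ℝ} {V : Matrix k n ℝ} {σ : n → ℝ} {s : ℝ}

theorem Matrix.diagonal_mulVec_dotProduct_self_le (hσ0 : ∀ i, 0 ≤ σ i) (hσs : ∀ i, σ i ≤ s)
    (x : n → ℝ) : (diagonal σ *ᵥ x) ⬝ᵥ (diagonal σ *ᵥ x) ≤ s ^ 2 * (x ⬝ᵥ x) := by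
  simp only [mulVec_diagonal, dotProduct, Finset.mul_sum]
  refine Finset.sum_le_sum fun i _ => ?_
  have : σ i ^ 2 ≤ s ^ 2 := pow_le_pow_left₀ (hσ0 i) (hσs i) 2
  nlinarith [mul_self_nonneg (x i)]

theorem Matrix.mul_dotProduct_self_le_diagonal_mulVec_dotProduct (hsσ : ∀ i, s ≤ σ i)
    (x : n → ℝ) : s * (x ⬝ᵥ x) ≤ (diagonal σ *ᵥ x) ⬝ᵥ x := by
  simp only [mulVec_diagonal, dotProduct, Finset.mul_sum]
  refine Finset.sum_le_sum fun i _ => ?_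
  nlinarith [mul_self_nonneg (x i), hsσ i]

theorem svd_mulVec_dotProduct_self_le (hU : Uᵀ * U = 1) (hσ0 : ∀ i, 0 ≤ σ i)
    (hσs : ∀ i, σ i ≤ s) (w : k → ℝ) :
    ((U * diagonal σ * Vᵀ) *ᵥ w) ⬝ᵥ ((U * diagonal σ * Vᵀ) *ᵥ w)
      ≤ s ^ 2 * ((Vᵀ *ᵥ w) ⬝ᵥ (Vᵀ *ᵥ w)) := by
  rw [← mulVec_mulVec, ← mulVec_mulVec, mulVec_dotProduct_mulVec_of_transpose_mul_self hU]
  exact diagonal_mulVec_dotProduct_self_le hσ0 hσs _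

theorem aligned_mulVec_dotProduct_self (hU : Uᵀ * U = 1) (w : k → ℝ) :
    ((s • (U * Vᵀ)) *ᵥ w) ⬝ᵥ ((s • (U * Vᵀ)) *ᵥ w) = s ^ 2 * ((Vᵀ *ᵥ w) ⬝ᵥ (Vᵀ *ᵥ w)) := by
  rw [smul_mulVec, ← mulVec_mulVec, smul_dotProduct, dotProduct_smul,
    mulVec_dotProduct_mulVec_of_transpose_mul_self hU, smul_eq_mul, smul_eq_mul]
  ring

theorem aligned_mulVec_dotProduct_self_le_svd_mulVec_dotProduct (hU : Uᵀ * U = 1) (hs : 0 ≤ s)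
    (hsσ : ∀ i, s ≤ σ i) (w : k → ℝ) :
    ((s • (U * Vᵀ)) *ᵥ w) ⬝ᵥ ((s • (U * Vᵀ)) *ᵥ w)
      ≤ ((U * diagonal σ * Vᵀ) *ᵥ w) ⬝ᵥ ((s • (U * Vᵀ)) *ᵥ w) := by
  rw [aligned_mulVec_dotProduct_self hU, smul_mulVec, ← mulVec_mulVec, ← mulVec_mulVec,
    ← mulVec_mulVec, dotProduct_smul, mulVec_dotProduct_mulVec_of_transpose_mul_self hU,
    smul_eq_mul, sq, mul_assoc]
  exact mul_le_mul_of_nonneg_left (mul_dotProduct_self_le_diagonal_mulVec_dotProduct hsσ _) hs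

end SingularValues

theorem aligned_rate_mul_lt {α ε C σ₁ σR W a : ℝ} (hα : 0 < α) (hC0 : 0 < C) (hσR : 0 < σR)
    (hC : C < σR / σ₁) (hεW : ε ^ 2 < W) (ha : a ≤ σ₁ ^ 2 * W) :
    α * ε ^ 2 * C ^ 2 / (2 * W) * a < α / 2 * (σR ^ 2 * W) := by
  have hW : 0 < W := (sq_nonneg ε).trans_lt hεW
  have hσ₁ : 0 < σ₁ := by
    by_contra! h
    exact (hC0.trans hC).not_ge (div_nonpos_of_nonneg_of_nonpos hσR.le h)
  have hCσ : C * σ₁ < σR := (lt_div_iff₀ hσ₁).mp hC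
  have hCσ_sq : (C * σ₁) ^ 2 < σR ^ 2 := pow_lt_pow_left₀ hCσ (by positivity) two_ne_zero
  calc α * ε ^ 2 * C ^ 2 / (2 * W) * a
      ≤ α * ε ^ 2 * C ^ 2 / (2 * W) * (σ₁ ^ 2 * W) := by gcongr
    _ = α / 2 * (ε ^ 2 * (C * σ₁) ^ 2) := by field_simp
    _ < α / 2 * (σR ^ 2 * W) := by
      refine mul_lt_mul_of_pos_left ?_ (half_pos hα)
      nlinarith [mul_le_mul_of_nonneg_right hεW.le (sq_nonneg (C * σ₁))]

theorem stmt_11_general (m T : ℕ)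
    (L : Fin T → EuclideanSpace ℝ (Fin m) → ℝ)
    (gradL : Fin T → EuclideanSpace ℝ (Fin m) → EuclideanSpace ℝ (Fin m))
    (Λ : ℝ) (hΛ : 0 < Λ)
    (hdiff : ∀ i θ, HasGradientAt (L i) (gradL i θ) θ)
    (w : Fin T → ℝ)
    (L0 : EuclideanSpace ℝ (Fin m) → ℝ) (hL0 : L0 = fun θ => ∑ i, w i * L i θ)
    (gradL0 : EuclideanSpace ℝ (Fin m) → EuclideanSpace ℝ (Fin m))
    (hdiff0 : ∀ θ, HasGradientAt L0 (gradL0 θ) θ)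
    (hlip0 : LipschitzWith (Real.toNNReal Λ) gradL0)
    (θt : EuclideanSpace ℝ (Fin m))
    (G : Matrix (Fin m) (Fin T) ℝ) (hGdef : ∀ j i, G j i = gradL i θt j)
    (U : Matrix (Fin m) (Fin T) ℝ) (V : Matrix (Fin T) (Fin T) ℝ)
    (σ : Fin T → ℝ)
    (σ₁ σR : ℝ)
    (hσ₁ : ∀ r, σ r ≤ σ₁)
    (hσR : ∀ r, σR ≤ σ r) (hσRpos : 0 < σR)
    (hU : Uᵀ * U = 1) (hV : Vᵀ * V = 1)
    (hSVD : G = U * Matrix.diagonal σ * Vᵀ)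
    (C ε : ℝ) (hC0 : 0 < C) (hε0 : 0 < ε)
    (hC : C < σR / σ₁)
    (hε : ε < Real.sqrt (∑ j, V.mulVec w j ^ 2))
    (G2 : Matrix (Fin m) (Fin T) ℝ) (hG2 : G2 = σR • (U * Vᵀ))
    (α : ℝ) (hα0 : 0 < α) (hα : α ≤ 1 / Λ)
    (θnext : EuclideanSpace ℝ (Fin m))
    (hupd : θnext = θt - α • (WithLp.equiv 2 (Fin m → ℝ)).symm (G2.mulVec w)) :
    L0 θt - L0 θnext
      > (α * ε ^ 2 * C ^ 2 / (2 * ∑ j, w j ^ 2)) * ∑ j, G.mulVec w j ^ 2 := by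
  have hW : (Vᵀ *ᵥ w) ⬝ᵥ (Vᵀ *ᵥ w) = ∑ j, w j ^ 2 := by
    rw [mulVec_dotProduct_mulVec_of_transpose_mul_self (by rw [transpose_transpose,
      mul_eq_one_comm.mp hV]), dotProduct_self_eq_sum_sq]
  have hεW : ε ^ 2 < ∑ j, w j ^ 2 := by
    rwa [Real.lt_sqrt hε0.le, ← dotProduct_self_eq_sum_sq,
      mulVec_dotProduct_mulVec_of_transpose_mul_self hV, dotProduct_self_eq_sum_sq] at hε
  have hgrad : gradL0 θt = WithLp.toLp 2 (G *ᵥ w) := by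
    refine (hdiff0 θt).unique ?_
    rw [hL0, ← EuclideanSpace.sum_smul_eq_toLp_mulVec G _ hGdef]
    exact hasGradientAt_sum_mul _ w fun i _ => hdiff i θt
  have hdesc := half_mul_norm_sq_le_sub_of_norm_sq_le_inner hΛ hdiff0 hlip0 hα0 hα
    (x := θt) (d := WithLp.toLp 2 (G2 *ᵥ w)) <| by
      rw [hgrad, ← real_inner_self_eq_norm_sq, EuclideanSpace.inner_toLp_toLp,
        EuclideanSpace.inner_toLp_toLp, star_trivial, star_trivial, hG2, hSVD]
      exact (aligned_mulVec_dotProduct_self_le_svd_mulVec_dotProduct hU hσRpos.le hσR w).trans_eq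
        (dotProduct_comm _ _)
  rw [← real_inner_self_eq_norm_sq, EuclideanSpace.inner_toLp_toLp, star_trivial, hG2,
    aligned_mulVec_dotProduct_self hU, hW, ← hG2] at hdesc
  refine lt_of_lt_of_le ?_ (hupd ▸ hdesc)
  rw [← dotProduct_self_eq_sum_sq (G *ᵥ w), hSVD]
  refine aligned_rate_mul_lt hα0 hC0 hσRpos hC hεW ?_
  rw [← hW]
  exact svd_mulVec_dotProduct_self_le hU (fun i => hσRpos.le.trans (hσR i)) hσ₁ w

/-- Per-step descent estimate of Aligned-MTL: under the SVD `G = U Σ Vᵀ` of the task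
gradient matrix at `θ_t`, with `σ_R/σ₁ > C`, `‖Vw‖ > ε`, aligned update
`θ_{t+1} = θ_t - α Ĝ w` with `Ĝ = σ_R U Vᵀ` and step size `α ≤ 1/Λ`,
`L₀(θ_t) - L₀(θ_{t+1}) > (α ε² C² / (2‖w‖²)) ‖g₀‖²` where `g₀ = Gw = ∇L₀(θ_t)`. -/
theorem stmt_11 (m T : ℕ) (hT : 0 < T)
    (L : Fin T → EuclideanSpace ℝ (Fin m) → ℝ)
    (gradL : Fin T → EuclideanSpace ℝ (Fin m) → EuclideanSpace ℝ (Fin m))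
    (Λ : ℝ) (hΛ : 0 < Λ)
    (hbdd : ∀ i, ∃ M, ∀ θ, M ≤ L i θ)
    (hdiff : ∀ i θ, HasGradientAt (L i) (gradL i θ) θ)
    (hlip : ∀ i, LipschitzWith (Real.toNNReal Λ) (gradL i))
    (w : Fin T → ℝ) (hw : w ≠ 0)
    (L0 : EuclideanSpace ℝ (Fin m) → ℝ) (hL0 : L0 = fun θ => ∑ i, w i * L i θ)
    (gradL0 : EuclideanSpace ℝ (Fin m) → EuclideanSpace ℝ (Fin m))
    (hdiff0 : ∀ θ, HasGradientAt L0 (gradL0 θ) θ)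
    (hlip0 : LipschitzWith (Real.toNNReal Λ) gradL0)
    (θt : EuclideanSpace ℝ (Fin m))
    (G : Matrix (Fin m) (Fin T) ℝ) (hGdef : ∀ j i, G j i = gradL i θt j)
    (U : Matrix (Fin m) (Fin T) ℝ) (V : Matrix (Fin T) (Fin T) ℝ)
    (σ : Fin T → ℝ) (hσ : ∀ i, 0 < σ i)
    (σ₁ σR : ℝ)
    (hσ₁ : ∀ r, σ r ≤ σ₁) (hσ₁mem : ∃ r, σ r = σ₁)
    (hσR : ∀ r, σR ≤ σ r) (hσRmem : ∃ r, σ r = σR) (hσRpos : 0 < σR)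
    (hU : Uᵀ * U = 1) (hV : Vᵀ * V = 1) (hV' : V * Vᵀ = 1)
    (hSVD : G = U * Matrix.diagonal σ * Vᵀ)
    (C ε : ℝ) (hC0 : 0 < C) (hε0 : 0 < ε)
    (hC : C < σR / σ₁)
    (hε : ε < Real.sqrt (∑ j, V.mulVec w j ^ 2))
    (G2 : Matrix (Fin m) (Fin T) ℝ) (hG2 : G2 = σR • (U * Vᵀ))
    (α : ℝ) (hα0 : 0 < α) (hα : α ≤ 1 / Λ)
    (θnext : EuclideanSpace ℝ (Fin m))
    (hupd : θnext = θt - α • (WithLp.equiv 2 (Fin m → ℝ)).symm (G2.mulVec w)) :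
    L0 θt - L0 θnext
      > (α * ε ^ 2 * C ^ 2 / (2 * ∑ j, w j ^ 2)) * ∑ j, G.mulVec w j ^ 2 :=
  stmt_11_general m T L gradL Λ hΛ hdiff w L0 hL0 gradL0 hdiff0 hlip0 θt G hGdef U V σ σ₁ σR hσ₁ hσR
    hσRpos hU hV hSVD C ε hC0 hε0 hC hε G2 hG2 α hα0 hα θnext hupd
end

section
/- Let M = GᵀG for G ∈ ℝ^{m×T} of full column rank, with eigendecomposition M = V diag(λ₁,…,λ_T) Vᵀ, λ₁ ≥ … ≥ λ_T > 0. Define B = √λ_T · V diag(λ₁^{-1/2},…,λ_T^{-1/2}) Vᵀ. Then G B = σ_R U Vᵀ, i.e., multiplying G by B on the right yields the aligned gradient matrix with all singular values equal to σ_R = √λ_T. -/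
open Matrix

/-- The balance transformation of the Aligned-MTL algorithm: with `M = GᵀG = V diag(λ) Vᵀ`,
`B = √λ_T · V diag(λᵢ^{-1/2}) Vᵀ` satisfies `G B = √λ_T · U Vᵀ`, the aligned gradient
matrix whose singular values all equal `σ_R = √λ_T`. -/
theorem stmt_16 (m T : ℕ) (G : Matrix (Fin m) (Fin T) ℝ)
    (U : Matrix (Fin m) (Fin T) ℝ) (V : Matrix (Fin T) (Fin T) ℝ)
    (lam : Fin T → ℝ) (hlam : ∀ i, 0 < lam i)
    (lamT : ℝ) (hmin : ∀ i, lamT ≤ lam i) (hmem : ∃ i, lam i = lamT)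
    (hU : Uᵀ * U = 1) (hV : Vᵀ * V = 1) (hV' : V * Vᵀ = 1)
    (hSVD : G = U * Matrix.diagonal (fun i => Real.sqrt (lam i)) * Vᵀ)
    (B : Matrix (Fin T) (Fin T) ℝ)
    (hB : B = Real.sqrt lamT •
      (V * Matrix.diagonal (fun i => (Real.sqrt (lam i))⁻¹) * Vᵀ)) :
    G * B = Real.sqrt lamT • (U * Vᵀ) := by
  subst hSVD hB
  have hd : Matrix.diagonal (fun i => Real.sqrt (lam i)) *
      Matrix.diagonal (fun i => (Real.sqrt (lam i))⁻¹) = 1 := by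
    rw [Matrix.diagonal_mul_diagonal]
    rw [show (fun i => Real.sqrt (lam i) * (Real.sqrt (lam i))⁻¹) = fun _ => 1 from
      funext fun i => mul_inv_cancel₀ (Real.sqrt_ne_zero'.mpr (hlam i)), Matrix.diagonal_one]
  rw [Matrix.mul_smul]
  congr 1
  calc U * Matrix.diagonal (fun i => Real.sqrt (lam i)) * Vᵀ *
      (V * Matrix.diagonal (fun i => (Real.sqrt (lam i))⁻¹) * Vᵀ)
      = U * (Matrix.diagonal (fun i => Real.sqrt (lam i)) * ((Vᵀ * V) *
        Matrix.diagonal (fun i => (Real.sqrt (lam i))⁻¹))) * Vᵀ := by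
        simp only [Matrix.mul_assoc]
    _ = U * Vᵀ := by rw [hV, Matrix.one_mul, hd, Matrix.mul_one]
end
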